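/- arXiv:2204.03425 — 3 statements merged into one kernel-verified Lean document; each statement's English description precedes it below -/
import Mathlib

section
/- Let D > 0 and h > 0 be real numbers, let Λ : [0,1] → ℝ and ŝ : [0,1] → ℝ be continuous, let c : [0,1] → ℝ, and let F ∈ ℝ. Suppose that for every η ∈ [0,1] the function η ↦ c(η)·exp(−Λ(η)) is differentiable at η with derivative −(h/D)·exp(−Λ(η))·(F + ŝ(η)). Then ∫₀¹ exp(−Λ(η)) dη > 0 and F = −(D/h)·(c(1)·exp(−Λ(1)) − c(0)·exp(−Λ(0)))/∫₀¹ exp(−Λ(η)) dη − (∫₀¹ exp(−Λ(η))·ŝ(η) dη)/(∫₀¹ exp(−Λ(η)) dη). -/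
/-!
Integrating the differential relation over `[0, 1]` (fundamental theorem of calculus) gives
`c(1) e^{-Λ(1)} - c(0) e^{-Λ(0)} = -(h/D) (F ∫ e^{-Λ} + ∫ e^{-Λ} ŝ)`. The weight `e^{-Λ}` is
positive and continuous, so its integral is positive and the identity can be solved for `F`.
-/

open Set MeasureTheory intervalIntegral

theorem integral_eq_sub_of_hasDerivWithinAt_Icc {E : Type*} [NormedAddCommGroup E]
    [NormedSpace ℝ E] [CompleteSpace E] {f f' : ℝ → E} {a b : ℝ} (hab : a ≤ b)
    (hderiv : ∀ x ∈ Icc a b, HasDerivWithinAt f (f' x) (Icc a b) x)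
    (hint : IntervalIntegrable f' volume a b) :
    ∫ x in a..b, f' x = f b - f a :=
  integral_eq_sub_of_hasDerivAt_of_le hab (fun x hx => (hderiv x hx).continuousWithinAt)
    (fun x hx => (hderiv x (Ioo_subset_Icc_self hx)).hasDerivAt (Icc_mem_nhds hx.1 hx.2)) hint

theorem integral_exp_neg_pos {Λ : ℝ → ℝ} {a b : ℝ} (hab : a < b)
    (hΛ : ContinuousOn Λ (Icc a b)) : 0 < ∫ x in a..b, Real.exp (-Λ x) :=
  intervalIntegral_pos_of_pos
    ((Real.continuous_exp.comp_continuousOn hΛ.neg).intervalIntegrable_of_Icc hab.le)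
    (fun _ => Real.exp_pos _) hab

theorem integral_representation_of_flux (D h : ℝ) (hD : D > 0) (hh : h > 0)
    (Λ sHat c : ℝ → ℝ) (F : ℝ)
    (hΛ : ContinuousOn Λ (Set.Icc 0 1)) (hsHat : ContinuousOn sHat (Set.Icc 0 1))
    (hderiv : ∀ η ∈ Set.Icc (0:ℝ) 1,
      HasDerivWithinAt (fun t => c t * Real.exp (-Λ t))
        (-(h / D) * Real.exp (-Λ η) * (F + sHat η)) (Set.Icc 0 1) η) :
    (0 < ∫ η in (0:ℝ)..1, Real.exp (-Λ η)) ∧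
    F = -(D / h) * (c 1 * Real.exp (-Λ 1) - c 0 * Real.exp (-Λ 0)) /
          (∫ η in (0:ℝ)..1, Real.exp (-Λ η))
        - (∫ η in (0:ℝ)..1, Real.exp (-Λ η) * sHat η) /
          (∫ η in (0:ℝ)..1, Real.exp (-Λ η)) := by
  have hweight : ContinuousOn (fun η => Real.exp (-Λ η)) (Icc 0 1) :=
    Real.continuous_exp.comp_continuousOn hΛ.neg
  have hweight_int : IntervalIntegrable (fun η => Real.exp (-Λ η)) volume 0 1 :=
    hweight.intervalIntegrable_of_Icc zero_le_one
  have hsource_int : IntervalIntegrable (fun η => Real.exp (-Λ η) * sHat η) volume 0 1 :=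
    (hweight.mul hsHat).intervalIntegrable_of_Icc zero_le_one
  have hpos := integral_exp_neg_pos zero_lt_one hΛ
  refine ⟨hpos, ?_⟩
  have hintegrand : (fun η => -(h / D) * Real.exp (-Λ η) * (F + sHat η))
      = fun η => -(h / D) * (F * Real.exp (-Λ η) + Real.exp (-Λ η) * sHat η) := by
    ext η; ring
  have hftc := integral_eq_sub_of_hasDerivWithinAt_Icc zero_le_one hderiv
    (hintegrand ▸ ((hweight_int.const_mul F).add hsource_int).const_mul (-(h / D)))
  rw [hintegrand, intervalIntegral.integral_const_mul, integral_add (hweight_int.const_mul F)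
    hsource_int, intervalIntegral.integral_const_mul] at hftc
  rw [← hftc]
  field_simp
  ring
end

section
/- Let Pe ≠ 0 be a real number and s₀, s₁ ∈ ℝ. Then (s₀·∫₀^{1/2} (η − 1/2)·exp(−Pe·(η − 1/2)) dη + s₁·∫_{1/2}¹ (η − 1/2)·exp(−Pe·(η − 1/2)) dη)/(∫₀¹ exp(−Pe·(η − 1/2)) dη) = W(Pe)·s₁ − W(−Pe)·s₀, where W(z) = (exp(z/2) − 1 − z/2)/(z·(exp(z) − 1)) for z ≠ 0. -/
/-!
After the shift `t = η - 1/2` all three integrals are elementary (antiderivatives `e^{ct}/c` and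
`(ct - 1) e^{ct}/c²`), and the right half of the flux divided by the denominator is exactly
`W(Pe)`. The reflection `η ↦ 1 - η` turns the left half into minus the right half with `Pe`
replaced by `-Pe`, and leaves the denominator unchanged under that replacement; this is where
`W(-Pe)` comes from.
-/

/-- The function `W(z) = (exp(z/2) − 1 − z/2) / (z (exp z − 1))` (for `z ≠ 0`). -/
noncomputable def Wfun (z : ℝ) : ℝ :=
  (Real.exp (z / 2) - 1 - z / 2) / (z * (Real.exp z - 1))

open Real intervalIntegral

theorem integral_exp_mul {c : ℝ} (hc : c ≠ 0) (a b : ℝ) :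
    ∫ x in a..b, exp (c * x) = (exp (c * b) - exp (c * a)) / c := by
  rw [integral_comp_mul_left exp hc, integral_exp, smul_eq_mul, inv_mul_eq_div]

theorem integral_mul_exp_mul {c : ℝ} (hc : c ≠ 0) (a b : ℝ) :
    ∫ x in a..b, x * exp (c * x)
      = ((c * b - 1) * exp (c * b) - (c * a - 1) * exp (c * a)) / c ^ 2 := by
  have hderiv (x : ℝ) :
      HasDerivAt (fun x ↦ (c * x - 1) * exp (c * x) / c ^ 2) (x * exp (c * x)) x := by
    have hlin : HasDerivAt (fun x ↦ c * x) c x := by simpa using (hasDerivAt_id x).const_mul c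
    refine (((hlin.sub_const 1).mul hlin.exp).div_const (c ^ 2)).congr_deriv ?_
    field_simp
    ring
  rw [integral_eq_sub_of_hasDerivAt (fun x _ ↦ hderiv x)
    ((by fun_prop : Continuous fun x ↦ x * exp (c * x)).intervalIntegrable a b), sub_div]

theorem Wfun_eq_integral_div_integral {z : ℝ} (hz : z ≠ 0) :
    Wfun z = (∫ η in (1/2:ℝ)..1, (η - 1/2) * exp (-z * (η - 1/2))) /
      ∫ η in (0:ℝ)..1, exp (-z * (η - 1/2)) := by
  have hc : -z ≠ 0 := neg_ne_zero.mpr hz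
  rw [integral_comp_sub_right (fun t ↦ t * exp (-z * t)),
    integral_comp_sub_right (fun t ↦ exp (-z * t))]
  have hexp : exp z - 1 ≠ 0 := sub_ne_zero.mpr (by simpa [exp_eq_one_iff] using hz)
  have hint : ∫ t in (0 - 1/2:ℝ)..1 - 1/2, exp (-z * t) ≠ 0 := by
    rw [integral_exp_mul hc]
    refine div_ne_zero (sub_ne_zero.mpr (exp_injective.ne ?_)) hc
    intro h; apply hz; linarith
  rw [Wfun, eq_div_iff hint, integral_mul_exp_mul hc, integral_exp_mul hc]
  have hz2 : exp z = exp (z / 2) ^ 2 := by rw [← exp_nat_mul]; ring_nf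
  have hexp_left : exp (-z * (0 - 1/2)) = exp (z / 2) := by ring_nf
  have hexp_right : exp (-z * (1 - 1/2)) = (exp (z / 2))⁻¹ := by rw [← exp_neg]; ring_nf
  rw [hz2] at hexp ⊢
  rw [hexp_left, hexp_right, sub_self, mul_zero, exp_zero]
  have hu : exp (z / 2) ≠ 0 := exp_ne_zero _
  generalize exp (z / 2) = u at *
  field_simp
  ring

theorem inhomogeneous_flux_pwc (Pe s₀ s₁ : ℝ) (hPe : Pe ≠ 0) :
    (s₀ * (∫ η in (0:ℝ)..(1/2), (η - 1/2) * Real.exp (-Pe * (η - 1/2))) +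
      s₁ * (∫ η in (1/2:ℝ)..1, (η - 1/2) * Real.exp (-Pe * (η - 1/2)))) /
        (∫ η in (0:ℝ)..1, Real.exp (-Pe * (η - 1/2)))
      = Wfun Pe * s₁ - Wfun (-Pe) * s₀ := by
  have hleft : ∫ η in (0:ℝ)..1/2, (η - 1/2) * exp (-Pe * (η - 1/2))
      = -∫ η in (1/2:ℝ)..1, (η - 1/2) * exp (-(-Pe) * (η - 1/2)) := by
    calc _ = -∫ η in (0:ℝ)..1/2, ((1 - η) - 1/2) * exp (-(-Pe) * ((1 - η) - 1/2)) := by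
          rw [← integral_neg]; congr 1; ext η; ring_nf
      _ = _ := by
          rw [integral_comp_sub_left (fun η ↦ (η - 1/2) * exp (-(-Pe) * (η - 1/2)))]
          norm_num
  have hdenom : ∫ η in (0:ℝ)..1, exp (-(-Pe) * (η - 1/2))
      = ∫ η in (0:ℝ)..1, exp (-Pe * (η - 1/2)) := by
    calc _ = ∫ η in (0:ℝ)..1, exp (-Pe * ((1 - η) - 1/2)) := by congr 1; ext η; ring_nf
      _ = _ := by rw [integral_comp_sub_left (fun η ↦ exp (-Pe * (η - 1/2)))]; norm_num
  rw [hleft, Wfun_eq_integral_div_integral hPe, Wfun_eq_integral_div_integral (neg_ne_zero.mpr hPe),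
    hdenom]
  ring
end

section
/- The Bernoulli function B : ℝ → ℝ, defined by B(z) = z/(exp(z) − 1) for z ≠ 0 and B(0) = 1, is strictly decreasing on ℝ. -/
/-!
On either side of `0`, `B z = z / (exp z - 1)` has derivative
`(exp z - 1 - z exp z) / (exp z - 1)²`, whose numerator `exp z (1 - z) - 1` is negative because
`1 - z < exp (-z)`. So `B` is strictly decreasing on `(-∞, 0)` and on `(0, ∞)`, and the two
pieces join across `B 0 = 1`, since `exp z - 1 > z` gives `B z > 1` for `z < 0` and `B z < 1`
for `z > 0`.
-/

/-- The Bernoulli function, extended continuously by `B(0) = 1`. -/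
noncomputable def bernoulliB (z : ℝ) : ℝ :=
  if z = 0 then 1 else z / (Real.exp z - 1)

open Set

theorem StrictAntiOn.Iic_of_Iio {α β : Type*} [LinearOrder α] [Preorder β] {f : α → β} {a : α}
    (h : StrictAntiOn f (Iio a)) (ha : ∀ x < a, f a < f x) : StrictAntiOn f (Iic a) := by
  intro x hx y hy hxy
  have hxa : x < a := hxy.trans_le hy
  rcases (mem_Iic.mp hy).lt_or_eq with hya | rfl
  · exact h hxa hya hxy
  · exact ha x hxa

theorem StrictAntiOn.Ici_of_Ioi {α β : Type*} [LinearOrder α] [Preorder β] {f : α → β} {a : α}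
    (h : StrictAntiOn f (Ioi a)) (ha : ∀ x > a, f x < f a) : StrictAntiOn f (Ici a) :=
  (h.dual.Iic_of_Iio ha).dual

namespace Real

theorem exp_sub_one_ne_zero {z : ℝ} (hz : z ≠ 0) : exp z - 1 ≠ 0 := by
  simpa [sub_eq_zero] using hz

theorem exp_mul_one_sub_lt_one {z : ℝ} (hz : z ≠ 0) : exp z * (1 - z) < 1 := by
  have h : 1 - z < exp (-z) := by linarith [add_one_lt_exp (neg_ne_zero.mpr hz)]
  calc exp z * (1 - z) < exp z * exp (-z) := mul_lt_mul_of_pos_left h (exp_pos z)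
    _ = 1 := by rw [← exp_add, add_neg_cancel, exp_zero]

theorem hasDerivAt_div_exp_sub_one {z : ℝ} (hz : z ≠ 0) :
    HasDerivAt (fun z => z / (exp z - 1)) ((exp z - 1 - z * exp z) / (exp z - 1) ^ 2) z := by
  refine ((hasDerivAt_id' z).fun_div ((hasDerivAt_exp z).sub_const 1)
    (exp_sub_one_ne_zero hz)).congr_deriv ?_
  ring

theorem strictAntiOn_div_exp_sub_one {s : Set ℝ} (hs : Convex ℝ s) (h0 : (0 : ℝ) ∉ s) :
    StrictAntiOn (fun z => z / (exp z - 1)) s := by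
  have hne : ∀ z ∈ s, z ≠ 0 := fun z hz h => h0 (h ▸ hz)
  refine strictAntiOn_of_deriv_neg hs
    (fun z hz => (hasDerivAt_div_exp_sub_one (hne z hz)).continuousAt.continuousWithinAt)
    fun z hz => ?_
  have hz : z ≠ 0 := hne z (interior_subset hz)
  rw [(hasDerivAt_div_exp_sub_one hz).deriv]
  exact div_neg_of_neg_of_pos (by linarith [exp_mul_one_sub_lt_one hz])
    (sq_pos_of_ne_zero (exp_sub_one_ne_zero hz))

end Real

theorem bernoulliB_zero : bernoulliB 0 = 1 := if_pos rfl

theorem bernoulliB_of_ne_zero {z : ℝ} (hz : z ≠ 0) : bernoulliB z = z / (Real.exp z - 1) :=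
  if_neg hz

theorem bernoulliB_lt_one {z : ℝ} (hz : 0 < z) : bernoulliB z < 1 := by
  have h := Real.add_one_lt_exp hz.ne'
  rw [bernoulliB_of_ne_zero hz.ne', div_lt_one (by linarith)]
  linarith

theorem one_lt_bernoulliB {z : ℝ} (hz : z < 0) : 1 < bernoulliB z := by
  have h := Real.add_one_lt_exp hz.ne
  rw [bernoulliB_of_ne_zero hz.ne, one_lt_div_of_neg (by linarith [Real.exp_lt_one_iff.mpr hz])]
  linarith

theorem bernoulliB_strictAntiOn_Iio : StrictAntiOn bernoulliB (Iio 0) :=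
  (Real.strictAntiOn_div_exp_sub_one (convex_Iio 0) self_notMem_Iio).congr
    fun _ hz => (bernoulliB_of_ne_zero (ne_of_lt hz)).symm

theorem bernoulliB_strictAntiOn_Ioi : StrictAntiOn bernoulliB (Ioi 0) :=
  (Real.strictAntiOn_div_exp_sub_one (convex_Ioi 0) self_notMem_Ioi).congr
    fun _ hz => (bernoulliB_of_ne_zero (ne_of_gt hz)).symm

theorem bernoulliB_strictAnti : StrictAnti bernoulliB :=
  StrictAntiOn.Iic_union_Ici (a := 0)
    (bernoulliB_strictAntiOn_Iio.Iic_of_Iio fun _ hz => bernoulliB_zero ▸ one_lt_bernoulliB hz)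
    (bernoulliB_strictAntiOn_Ioi.Ici_of_Ioi fun _ hz => bernoulliB_zero ▸ bernoulliB_lt_one hz)
end
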